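/- arXiv:2506.04918 — 2 statements merged into one kernel-verified Lean document; each statement's English description precedes it below -/
import Mathlib

section
/- For n ≥ 2, the polar Legendre polynomial P_n satisfies the differential equation (x² - 1) P_n''(x) + 2(x + 1) P_n'(x) - n(n+1) P_n(x) = 0. -/
open intervalIntegral Finset Polynomial

/-- The `n`-th Legendre polynomial (as a function), via the Rodrigues formula,
normalized so that `legendreP n 1 = 1`. -/
noncomputable def legendreP (n : ℕ) : ℝ → ℝ :=
  fun x => (1 / (2 ^ n * (n.factorial : ℝ))) * iteratedDeriv n (fun y => (y ^ 2 - 1) ^ n) x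

/-- `Qpoly n x = -∫_x^1 L_{n-1}(t) dt`. -/
noncomputable def Qpoly (n : ℕ) : ℝ → ℝ :=
  fun x => -∫ t in x..(1 : ℝ), legendreP (n - 1) t

/-!
Put `Q = (x - 1) P`. Differentiating the defining relation gives `Q' = (n + 1) L_n`, and the
Rodrigues polynomial `dⁿ/dxⁿ (x² - 1)ⁿ` solves the Legendre equation
`(x² - 1) y'' + 2 x y' - n (n + 1) y = 0`: apply `dⁿ⁺¹` to
`((x² - 1)ⁿ⁺¹)' = 2 (n + 1) x (x² - 1)ⁿ` and use the Leibniz rule for products with `x` and `x²`.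
If `G` is the left-hand side of the claimed equation, then `(x - 1) G = (x² - 1) Q'' - n (n + 1) Q`,
whose derivative is the Legendre operator applied to `Q'`, hence zero. So `(x - 1) G` is a
constant vanishing at `x = 1`, and `G = 0`.
-/

namespace Polynomial

variable {R : Type*} [CommRing R]

theorem iterate_derivative_succ_mul_X (p : R[X]) (k : ℕ) :
    derivative^[k + 1] (p * X) =
      derivative^[k + 1] p * X + ((k : R[X]) + 1) * derivative^[k] p := by
  rw [iterate_derivative_mul_X, nsmul_eq_mul]
  push_cast
  rfl

theorem iterate_derivative_succ_succ_mul_X_sq (p : R[X]) (k : ℕ) :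
    derivative^[k + 2] (p * X ^ 2) =
      derivative^[k + 2] p * X ^ 2 + 2 * ((k : R[X]) + 2) * derivative^[k + 1] p * X
        + ((k : R[X]) + 2) * ((k : R[X]) + 1) * derivative^[k] p := by
  rw [sq, ← mul_assoc, iterate_derivative_succ_mul_X, iterate_derivative_succ_mul_X,
    iterate_derivative_succ_mul_X]
  push_cast
  ring

theorem derivative_X_sq_sub_one_pow_succ (n : ℕ) :
    derivative (((X : R[X]) ^ 2 - 1) ^ (n + 1)) =
      2 * ((n : R[X]) + 1) * X * (X ^ 2 - 1) ^ n := by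
  rw [derivative_pow]
  simp only [derivative_sub, derivative_X_pow, derivative_one, C_eq_natCast]
  push_cast
  ring

noncomputable def rodrigues (n : ℕ) : R[X] := derivative^[n] ((X ^ 2 - 1) ^ n)

theorem rodrigues_legendre_ode (n : ℕ) :
    (X ^ 2 - 1) * derivative (derivative (rodrigues n : R[X]))
      + 2 * X * derivative (rodrigues n) - (n : R[X]) * ((n : R[X]) + 1) * rodrigues n = 0 := by
  set u : R[X] := (X ^ 2 - 1) ^ n
  have key := congrArg (derivative^[n + 1]) (derivative_X_sq_sub_one_pow_succ (R := R) n)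
  rw [show 2 * ((n : R[X]) + 1) * X * u = ((2 * (n + 1) : ℕ) : R[X]) * (u * X) by
      push_cast; ring,
    iterate_derivative_natCast_mul, iterate_derivative_succ_mul_X, ← Function.iterate_succ_apply,
    pow_succ, mul_sub, mul_one, iterate_derivative_sub, iterate_derivative_succ_succ_mul_X_sq]
    at key
  simp only [rodrigues, ← Function.iterate_succ_apply' derivative] at key ⊢
  push_cast at key
  linear_combination key

theorem polar_ode_of_derivative_X_sub_one_mul [IsAddTorsionFree R] {P L : R[X]} {a c : R}
    (hL : (X ^ 2 - 1) * derivative (derivative L) + 2 * X * derivative L - C c * L = 0)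
    (hP : derivative ((X - 1) * P) = C a * L) :
    (X ^ 2 - 1) * derivative (derivative P) + 2 * (X + 1) * derivative P - C c * P = 0 := by
  set G := (X ^ 2 - 1) * derivative (derivative P) + 2 * (X + 1) * derivative P - C c * P
  have hG : (X - 1) * G =
      (X ^ 2 - 1) * derivative (derivative ((X - 1) * P)) - C c * ((X - 1) * P) := by
    simp only [G, derivative_mul, derivative_add, derivative_sub, derivative_X, derivative_one,
      derivative_zero]
    ring
  have hG' : derivative ((X - 1) * G) = 0 := by
    rw [hG]
    simp only [derivative_mul, derivative_sub, derivative_X_pow, derivative_one, derivative_C, hP,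
      zero_mul, zero_add, Nat.cast_ofNat, map_ofNat]
    linear_combination C a * hL
  have hG0 : (X - 1) * G = 0 := by
    have hconst := eq_C_of_derivative_eq_zero hG'
    have h1 : ((X - 1) * G).eval 1 = 0 := by simp
    rw [hconst, eval_C] at h1
    rw [hconst, h1, C_0]
  simpa using (monic_X_sub_C (1 : R)).mul_right_eq_zero_iff.mp (by simpa using hG0)

theorem iteratedDeriv_eval {𝕜 : Type*} [NontriviallyNormedField 𝕜] (p : 𝕜[X]) (k : ℕ) :
    iteratedDeriv k (fun x => p.eval x) = fun x => (derivative^[k] p).eval x := by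
  induction k with
  | zero => rfl
  | succ k ih =>
    rw [iteratedDeriv_succ, ih, Function.iterate_succ_apply']
    funext x
    exact Polynomial.deriv _

theorem derivative_eq_of_eval_eq_integral {Q L : ℝ[X]} {a : ℝ}
    (h : ∀ x, Q.eval x = ∫ t in a..x, L.eval t) : derivative Q = L :=
  Polynomial.funext fun x => (Q.hasDerivAt x).unique <| by
    simpa only [← h] using (L.continuous.integral_hasStrictDerivAt a x).hasDerivAt

end Polynomial

theorem legendreP_eq_eval_rodrigues (n : ℕ) :
    legendreP n = fun x => (1 / (2 ^ n * (n.factorial : ℝ))) * (rodrigues n).eval x := by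
  have h : (fun y : ℝ => (y ^ 2 - 1) ^ n) = fun y => ((X ^ 2 - 1 : ℝ[X]) ^ n).eval y := by
    simp
  funext x
  rw [legendreP, h, iteratedDeriv_eval, rodrigues]

theorem stmt9_general (n : ℕ) (P : Polynomial ℝ)
    (hdef : ∀ x : ℝ, -((n : ℝ) + 1) * ∫ t in x..(1 : ℝ), legendreP n t = (x - 1) * P.eval x)
    (x : ℝ) :
    (x ^ 2 - 1) * (Polynomial.derivative (Polynomial.derivative P)).eval x +
      2 * (x + 1) * (Polynomial.derivative P).eval x - (n : ℝ) * ((n : ℝ) + 1) * P.eval x = 0 := by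
  have hP : derivative ((X - 1) * P) =
      C (((n : ℝ) + 1) * (1 / (2 ^ n * (n.factorial : ℝ)))) * rodrigues n := by
    refine derivative_eq_of_eval_eq_integral (a := 1) fun y => ?_
    rw [eval_mul, eval_sub, eval_X, eval_one, ← hdef y, integral_symm,
      legendreP_eq_eval_rodrigues]
    simp only [eval_mul, eval_C, integral_const_mul]
    ring
  have hL : (X ^ 2 - 1) * derivative (derivative (rodrigues n : ℝ[X]))
      + 2 * X * derivative (rodrigues n) - C ((n : ℝ) * ((n : ℝ) + 1)) * rodrigues n = 0 := by
    simpa using rodrigues_legendre_ode (R := ℝ) n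
  simpa using congrArg (eval x) (polar_ode_of_derivative_X_sub_one_mul hL hP)

theorem stmt9 (n : ℕ) (hn : 2 ≤ n) (P : Polynomial ℝ) (hdeg : P.degree = n)
    (hdef : ∀ x : ℝ, -((n : ℝ) + 1) * ∫ t in x..(1 : ℝ), legendreP n t = (x - 1) * P.eval x)
    (x : ℝ) :
    (x ^ 2 - 1) * (Polynomial.derivative (Polynomial.derivative P)).eval x +
      2 * (x + 1) * (Polynomial.derivative P).eval x - (n : ℝ) * ((n : ℝ) + 1) * P.eval x = 0 :=
  stmt9_general n P hdef x
end

section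
/- For n ≥ 1, P_n(x) = (x + 1)/(2^n n! n) · d^{n+1}/dx^{n+1}[(x² - 1)^n] (a Rodrigues-type formula for polar Legendre polynomials). -/
/-!
With `D = d/dx` and `u = (x² - 1)ⁿ`, the identity `(x² - 1) u' = 2n x u`, differentiated `n`
times by Leibniz' rule, gives `(x² - 1) D^{n+1} u = n (n + 1) D^{n-1} u`. Since `D^{n-1} u` is
divisible by `x² - 1`, it vanishes at `1`, so integrating `L_n = D^n u / (2ⁿ n!)` from `x` to `1` gives
`(x - 1) P_n(x) = (n + 1) D^{n-1} u(x) / (2ⁿ n!) = (x² - 1) D^{n+1} u(x) / (2ⁿ n! n)`.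
Dividing by `x - 1` gives the formula off `x = 1`, and continuity gives it at `x = 1`.
-/

open intervalIntegral Finset Polynomial

section Algebra

variable {R : Type*} [CommRing R]

lemma sq_sub_one_mul_derivative_pow (n : ℕ) :
    (X ^ 2 - 1 : R[X]) * derivative ((X ^ 2 - 1) ^ n) = 2 * (n : R[X]) * X * (X ^ 2 - 1) ^ n := by
  cases n with
  | zero => simp
  | succ m =>
    rw [derivative_pow_succ]
    simp only [derivative_sub, derivative_X_pow, derivative_one, map_add, C_eq_natCast, map_one]
    push_cast
    ring

lemma sq_sub_one_mul_iterate_derivative_succ_succ {f : R[X]} {c : R}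
    (hf : (X ^ 2 - 1) * derivative f = C c * X * f) (k : ℕ) :
    (X ^ 2 - 1) * derivative^[k + 2] f
      = (C c - 2 * ((k : R[X]) + 1)) * X * derivative^[k + 1] f
        + ((k : R[X]) + 1) * (C c - (k : R[X])) * derivative^[k] f := by
  induction k with
  | zero =>
    have h := congrArg derivative hf
    simp only [derivative_mul, derivative_sub, derivative_X_pow, derivative_one, derivative_C,
      derivative_X, Nat.cast_ofNat, C_ofNat] at h
    simp only [Function.iterate_succ_apply', Function.iterate_zero_apply]
    push_cast
    linear_combination h
  | succ k ih =>
    have h := congrArg derivative ih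
    simp only [derivative_mul, derivative_sub, derivative_add, derivative_X_pow, derivative_one,
      derivative_C, derivative_X, derivative_natCast, derivative_ofNat, Nat.cast_ofNat, C_ofNat,
      ← Function.iterate_succ_apply' derivative] at h
    push_cast at h ⊢
    linear_combination h

lemma sq_sub_one_mul_iterate_derivative_sq_sub_one_pow (n : ℕ) :
    (X ^ 2 - 1 : R[X]) * derivative^[n + 1] ((X ^ 2 - 1) ^ n)
      = (n : R[X]) * ((n : R[X]) + 1) * derivative^[n - 1] ((X ^ 2 - 1) ^ n) := by
  cases n with
  | zero => simp
  | succ m =>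
    have hf : (X ^ 2 - 1 : R[X]) * derivative ((X ^ 2 - 1) ^ (m + 1))
        = C (2 * (m + 1 : R)) * X * (X ^ 2 - 1) ^ (m + 1) := by
      rw [sq_sub_one_mul_derivative_pow]
      simp only [map_mul, map_add, C_ofNat, C_eq_natCast, map_one]
      push_cast
      ring
    rw [sq_sub_one_mul_iterate_derivative_succ_succ hf m]
    simp only [map_mul, map_add, C_ofNat, C_eq_natCast, map_one, Nat.add_sub_cancel]
    push_cast
    ring

end Algebra

lemma iteratedDeriv_polynomial_eval (p : ℝ[X]) (k : ℕ) :
    iteratedDeriv k (fun x => p.eval x) = fun x => (derivative^[k] p).eval x := by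
  induction k with
  | zero => simp
  | succ k ih =>
    rw [iteratedDeriv_succ, ih, Function.iterate_succ_apply']
    exact funext fun x => Polynomial.deriv _

lemma integral_eval_derivative (p : ℝ[X]) (a b : ℝ) :
    ∫ t in a..b, (derivative p).eval t = p.eval b - p.eval a :=
  integral_eq_sub_of_hasDerivAt (fun t _ => p.hasDerivAt t)
    ((derivative p).continuous.intervalIntegrable a b)

lemma iteratedDeriv_sq_sub_one_pow (k n : ℕ) :
    iteratedDeriv k (fun y : ℝ => (y ^ 2 - 1) ^ n)
      = fun y => (derivative^[k] ((X ^ 2 - 1 : ℝ[X]) ^ n)).eval y := by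
  rw [← iteratedDeriv_polynomial_eval]
  simp

lemma legendreP_eq_eval (n : ℕ) (x : ℝ) :
    legendreP n x = (2 ^ n * n.factorial : ℝ)⁻¹ * (derivative^[n] ((X ^ 2 - 1) ^ n)).eval x := by
  rw [legendreP, iteratedDeriv_sq_sub_one_pow, one_div]

lemma integral_legendreP {n : ℕ} (hn : 1 ≤ n) (x : ℝ) :
    ∫ t in x..1, legendreP n t
      = -(2 ^ n * n.factorial : ℝ)⁻¹ * (derivative^[n - 1] ((X ^ 2 - 1) ^ n)).eval x := by
  have hroot : (derivative^[n - 1] ((X ^ 2 - 1 : ℝ[X]) ^ n)).eval 1 = 0 := by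
    refine eval_eq_zero_of_dvd_of_eval_eq_zero ?_ (by simp : (X ^ 2 - 1 : ℝ[X]).eval 1 = 0)
    simpa [Nat.sub_sub_self hn] using pow_sub_dvd_iterate_derivative_pow (X ^ 2 - 1 : ℝ[X]) n (n - 1)
  have hn' : n = n - 1 + 1 := by omega
  simp only [legendreP_eq_eval, integral_const_mul]
  rw [hn', Function.iterate_succ_apply', integral_eval_derivative, ← hn', hroot]
  ring

theorem stmt11_general (n : ℕ) (hn : 1 ≤ n) (P : Polynomial ℝ)
    (hdef : ∀ x : ℝ, -((n : ℝ) + 1) * ∫ t in x..(1 : ℝ), legendreP n t = (x - 1) * P.eval x)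
    (x : ℝ) :
    P.eval x = (x + 1) / (2 ^ n * (n.factorial : ℝ) * (n : ℝ)) *
      iteratedDeriv (n + 1) (fun y => (y ^ 2 - 1) ^ n) x := by
  rw [iteratedDeriv_sq_sub_one_pow]
  have hc : (2 ^ n * n.factorial : ℝ) ≠ 0 := by positivity
  have hn0 : (n : ℝ) ≠ 0 := Nat.cast_ne_zero.mpr (by omega)
  have hoff : ∀ y ∈ ({1}ᶜ : Set ℝ), P.eval y = (y + 1) / (2 ^ n * n.factorial * n) *
      (derivative^[n + 1] ((X ^ 2 - 1 : ℝ[X]) ^ n)).eval y := by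
    intro y hy
    have hy1 : y - 1 ≠ 0 := sub_ne_zero.mpr hy
    have hkey := congrArg (eval y) (sq_sub_one_mul_iterate_derivative_sq_sub_one_pow (R := ℝ) n)
    simp only [eval_mul, eval_sub, eval_add, eval_pow, eval_X, eval_one, eval_natCast] at hkey
    have hP := hdef y
    rw [integral_legendreP hn] at hP
    apply mul_left_cancel₀ hy1
    rw [← hP]
    field_simp
    linear_combination -hkey
  exact congrFun (Continuous.ext_on (dense_compl_singleton 1) P.continuous (by fun_prop) hoff) x

theorem stmt11 (n : ℕ) (hn : 1 ≤ n) (P : Polynomial ℝ) (hdeg : P.degree = n)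
    (hdef : ∀ x : ℝ, -((n : ℝ) + 1) * ∫ t in x..(1 : ℝ), legendreP n t = (x - 1) * P.eval x)
    (x : ℝ) :
    P.eval x = (x + 1) / (2 ^ n * (n.factorial : ℝ) * (n : ℝ)) *
      iteratedDeriv (n + 1) (fun y => (y ^ 2 - 1) ^ n) x :=
  stmt11_general n hn P hdef x
end
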